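/- Fix a charge (s_0,s_1)∈ℤ² with s_0 ≤ s_1. For every n≥0, the set Φ_{∞,n}^{(s_0,s_1)} labeling the crystal of the irreducible highest weight U_v(sl_∞)-module of highest weight Λ_{s_0}+Λ_{s_1} is given explicitly by Φ_{∞,n}^{(s_0,s_1)} = { λ=(λ^(0),λ^(1)) ∈ Π_{2,n} : λ^(0)_i ≥ λ^(1)_{i+s_1−s_0} for all i = 1,2,3,… } (parts beyond the length of a partition are 0). -/

import Mathlib

open Finset

/-- A node `(a, b, c)`: row index `a ≥ 1`, column index `b ≥ 1`, component `c ∈ {0,1}`. -/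
abbrev Node : Type := ℕ × ℕ × Fin 2

namespace UglovPaper

/-- Row index of a node. -/
def nrow (γ : Node) : ℕ := γ.1

/-- Column index of a node. -/
def ncol (γ : Node) : ℕ := γ.2.1

/-- Component of a node. -/
def ncomp (γ : Node) : Fin 2 := γ.2.2

/-- A finite set of nodes is the Young diagram of a bipartition iff all indices are `≥ 1`
and the set is closed under moving left in a row and up in a column (in each component). -/
def IsDiagram (D : Finset Node) : Prop :=
  (∀ γ ∈ D, 1 ≤ nrow γ ∧ 1 ≤ ncol γ) ∧
  (∀ γ ∈ D, ∀ b' : ℕ, 1 ≤ b' → b' ≤ ncol γ → (nrow γ, b', ncomp γ) ∈ D) ∧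
  (∀ γ ∈ D, 2 ≤ nrow γ → (nrow γ - 1, ncol γ, ncomp γ) ∈ D)

/-- `part D c a` is the `a`-th part `λ^(c)_a` of the bipartition with diagram `D`. -/
def part (D : Finset Node) (c : Fin 2) (a : ℕ) : ℕ :=
  (D.filter (fun γ => nrow γ = a ∧ ncomp γ = c)).card

/-- The content `b - a + s_c` of a node `(a,b,c)` for the charge `s`. -/
def cont (s : Fin 2 → ℤ) (γ : Node) : ℤ := (ncol γ : ℤ) - (nrow γ : ℤ) + s (ncomp γ)

/-- The residue mod `e` of a node for the charge `s`. -/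
def res (e : ℕ) (s : Fin 2 → ℤ) (γ : Node) : ZMod e := ((cont s γ : ℤ) : ZMod e)

/-- The order `γ <_{(s₀,s₁)} γ'` on nodes. -/
def chargeLT (s : Fin 2 → ℤ) (γ γ' : Node) : Prop :=
  cont s γ < cont s γ' ∨ (cont s γ = cont s γ' ∧ ncomp γ' < ncomp γ)

/-- The positive asymptotic order `γ <_{(v₀,v₁)₊} γ'`. -/
def posLT (γ γ' : Node) : Prop :=
  ncomp γ' < ncomp γ ∨ (ncomp γ = ncomp γ' ∧ nrow γ' < nrow γ)

/-- The negative asymptotic order `γ <_{(v₀,v₁)₋} γ'`. -/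
def negLT (γ γ' : Node) : Prop :=
  ncomp γ < ncomp γ' ∨ (ncomp γ = ncomp γ' ∧ nrow γ' < nrow γ)

/-- `γ` is a removable node of the diagram `D`. -/
def Removable (D : Finset Node) (γ : Node) : Prop := γ ∈ D ∧ IsDiagram (D.erase γ)

/-- `γ` is an addable node of the diagram `D`. -/
def Addable (D : Finset Node) (γ : Node) : Prop := γ ∉ D ∧ IsDiagram (insert γ D)

/-- `γ` is a normal `i`-node of `D` with respect to the order `lt` and the residue map `r`:
it is a removable `i`-node, and for every `i`-node `η` above it, the number of addable
`i`-nodes in the interval `(γ, η]` does not exceed the number of removable `i`-nodes there.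
This is equivalent to surviving the `RA`-deletion process. -/
def NormalNode {α : Type*} (D : Finset Node) (lt : Node → Node → Prop)
    (r : Node → α) (i : α) (γ : Node) : Prop :=
  Removable D γ ∧ r γ = i ∧
  ∀ η : Node, r η = i → lt γ η →
    {x : Node | Addable D x ∧ r x = i ∧ lt γ x ∧ (lt x η ∨ x = η)}.ncard ≤
    {x : Node | Removable D x ∧ r x = i ∧ lt γ x ∧ (lt x η ∨ x = η)}.ncard

/-- `γ` is the good `i`-node of `D`: the minimal normal `i`-node for the order `lt`. -/
def GoodNode {α : Type*} (D : Finset Node) (lt : Node → Node → Prop)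
    (r : Node → α) (i : α) (γ : Node) : Prop :=
  NormalNode D lt r i γ ∧ ∀ δ : Node, NormalNode D lt r i δ → δ = γ ∨ lt γ δ

/-- The recursively defined class of bipartitions labelling the crystal:
the empty bipartition has rank `0`, and a bipartition of rank `n + 1` belongs iff
removing some good `i`-node yields a member of rank `n`. -/
inductive CrystalSet {α : Type*} (lt : Node → Node → Prop) (r : Node → α) :
    ℕ → Finset Node → Prop
  | empty : CrystalSet lt r 0 ∅
  | step {n : ℕ} {D : Finset Node} {γ : Node} (i : α) :
      IsDiagram D → GoodNode D lt r i γ →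
      CrystalSet lt r n (D.erase γ) → CrystalSet lt r (n + 1) D

/-- The set `Φ_{e,n}^{(s₀,s₁)}` of Uglov bipartitions. -/
def UglovSet (e : ℕ) (s : Fin 2 → ℤ) : ℕ → Finset Node → Prop :=
  CrystalSet (chargeLT s) (res e s)

/-- The set `Φ_{e,n}^{(v₀,v₁)₊}` of positive Kleshchev bipartitions. -/
def KleshchevPos (e : ℕ) (v : Fin 2 → ℤ) : ℕ → Finset Node → Prop :=
  CrystalSet posLT (res e v)

/-- The set `Φ_{e,n}^{(v₀,v₁)₋}` of negative Kleshchev bipartitions. -/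
def KleshchevNeg (e : ℕ) (v : Fin 2 → ℤ) : ℕ → Finset Node → Prop :=
  CrystalSet negLT (res e v)

/-- Swapping the two components of a bipartition: `(λ⁽⁰⁾,λ⁽¹⁾) ↦ (λ⁽¹⁾,λ⁽⁰⁾)`. -/
def swapDiagram (D : Finset Node) : Finset Node :=
  D.image (fun γ => (γ.1, γ.2.1, γ.2.2 + 1))

/-! ### Symbols -/

/-- `beta s m D c j` is the `j`-th entry `β^(c)_j = λ^(c)_j − j + s_c + m` of the
`s`-symbol of `D`, for `1 ≤ j ≤ m + s_c`. -/
def beta (s : Fin 2 → ℕ) (m : ℕ) (D : Finset Node) (c : Fin 2) (j : ℕ) : ℕ :=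
  part D c j + (m + s c) - j

/-- The multiset of entries of the row `β^(c)` of the `s`-symbol. -/
def rowM (s : Fin 2 → ℕ) (m : ℕ) (D : Finset Node) (c : Fin 2) : Multiset ℕ :=
  (Finset.Icc 1 (m + s c)).val.map (beta s m D c)

/-- The list of the values `θ(β⁽⁰⁾_{m+s₀}), θ(β⁽⁰⁾_{m+s₀-1}), …` chosen greedily:
at step `k` (handling `p = m + s₀ - k`) we choose the largest entry of the top row not yet
used that is `≤ β⁽⁰⁾_p`. -/
def thetaList (s : Fin 2 → ℕ) (m : ℕ) (D : Finset Node) : ℕ → List ℕ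
  | 0 => []
  | k + 1 =>
      let prev := thetaList s m D k
      prev ++ [WithBot.unbotD 0 ((((Finset.Icc 1 (m + s 1)).image (beta s m D 1)).filter
          (fun y => y ∉ prev ∧ y ≤ beta s m D 0 (m + s 0 - k))).max)]

/-- The greedy injection `θ`, as a function of the index `p ∈ {1, …, m + s₀}`:
`theta s m D p = θ(β⁽⁰⁾_p)`. -/
def theta (s : Fin 2 → ℕ) (m : ℕ) (D : Finset Node) (p : ℕ) : ℕ :=
  (thetaList s m D (m + s 0)).getD (m + s 0 - p) 0

/-- The bottom row of the symbol obtained by exchanging the entries of every pair: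
it is the multiset of the values `θ(β⁽⁰⁾_p)`. -/
def bottomRowNew (s : Fin 2 → ℕ) (m : ℕ) (D : Finset Node) : Multiset ℕ :=
  (Finset.Icc 1 (m + s 0)).val.map (theta s m D)

/-- The top row of the symbol obtained by exchanging the entries of every pair:
all entries of both rows that did not go to the new bottom row. -/
def topRowNew (s : Fin 2 → ℕ) (m : ℕ) (D : Finset Node) : Multiset ℕ :=
  (rowM s m D 0 + rowM s m D 1) - bottomRowNew s m D

/-- The rows of the symbol of `Υ(λ)`. -/
def newRow (s : Fin 2 → ℕ) (m : ℕ) (D : Finset Node) (c : Fin 2) : Multiset ℕ :=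
  if c = 0 then bottomRowNew s m D else topRowNew s m D

/-- The `j`-th largest entry of a multiset of naturals (`j ≥ 1`). -/
def rowEntry (B : Multiset ℕ) (j : ℕ) : ℕ :=
  (B.sort (· ≤ ·)).getD (Multiset.card B - j) 0

/-- The `j`-th part of the partition encoded by a multiset of `card B` distinct
beta-numbers: `λ_j = (j-th largest entry) + j - card B`. -/
def rowPart (B : Multiset ℕ) (j : ℕ) : ℕ :=
  if 1 ≤ j ∧ j ≤ Multiset.card B then rowEntry B j + j - Multiset.card B else 0

/-- The Young diagram of the bipartition with parts `p`, within the box of size `N`. -/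
def toDiagram (p : Fin 2 → ℕ → ℕ) (N : ℕ) : Finset Node :=
  ((Finset.Icc 1 N) ×ˢ (Finset.Icc 1 N) ×ˢ (Finset.univ : Finset (Fin 2))).filter
    (fun γ => γ.2.1 ≤ p γ.2.2 γ.1)

/-- The map `Υ_{(s₀,s₁)}`: exchange the two entries of every pair of the `s`-symbol and
reorder the rows; `Upsilon s m D` is the diagram of the resulting bipartition. -/
def Upsilon (s : Fin 2 → ℕ) (m : ℕ) (D : Finset Node) : Finset Node :=
  toDiagram (fun c j => rowPart (newRow s m D c) j) D.card

/-- The list of values `τ(α⁽⁰⁾_1), τ(α⁽⁰⁾_2), …` chosen greedily: at step `k + 1`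
(handling `p = k + 1`) we choose the smallest entry of the top row `Top` not yet used
that is `≥ b (k+1)`, where `b p` is the `p`-th entry of the bottom row. -/
def tauList (Top : Finset ℕ) (b : ℕ → ℕ) : ℕ → List ℕ
  | 0 => []
  | k + 1 =>
      let prev := tauList Top b k
      prev ++ [WithTop.untopD 0 ((Top.filter (fun y => y ∉ prev ∧ b (k + 1) ≤ y)).min)]

/-- The greedy injection `τ`, as a function of the index `p ∈ {1, …, P}`. -/
def tau (Top : Finset ℕ) (b : ℕ → ℕ) (P : ℕ) (p : ℕ) : ℕ :=
  (tauList Top b P).getD (p - 1) 0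

end UglovPaper

/-! Write `d = s₁ - s₀`. For `e = ∞` the addable and removable nodes of one component have
pairwise distinct contents, so an `i`-word has at most two letters, the one coming from `λ⁽¹⁾`
first. Hence a removable node of `λ⁽¹⁾` is good unless `λ⁽⁰⁾` has an addable node of the same
content, and a removable node of `λ⁽⁰⁾` is good unless `λ⁽¹⁾` has a removable node of the same
content.

Removing a good node never repairs a violation of `λ⁽⁰⁾_i ≥ λ⁽¹⁾_{i+d}`: the only candidate is
the last node of row `i + d` of `λ⁽¹⁾` when `λ⁽¹⁾_{i+d} = λ⁽⁰⁾_i + 1`, and then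
`(i, λ⁽⁰⁾_i + 1, 0)` is addable of the same content. Conversely, a nonempty bipartition
satisfying the inequalities has a good node whose removal keeps them: either a removable node of
`λ⁽¹⁾` with no such addable partner, or, if every one of them has a partner, the partner of the
last row of `λ⁽¹⁾` sits in a row `i₀` with `λ⁽¹⁾_{i₀+d} = 0`, and we remove the last node of the
block of rows of `λ⁽⁰⁾` of length `λ⁽⁰⁾_{i₀}`. -/

namespace UglovPaper

lemma exists_le_and_lt_succ {f : ℕ → ℕ} {v i₀ : ℕ} (h₀ : v ≤ f i₀) {N : ℕ} (hN : f N < v)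
    (hle : i₀ ≤ N) : ∃ i, i₀ ≤ i ∧ v ≤ f i ∧ f (i + 1) < v := by
  induction N, hle using Nat.le_induction with
  | base => omega
  | succ n hn ih =>
    by_cases hn' : f n < v
    · exact ih hn'
    · exact ⟨n, hn, not_lt.1 hn', hN⟩

section Diagram

variable {D : Finset Node} {a a' b : ℕ} {c : Fin 2}

lemma le_part_of_mem (hD : IsDiagram D) (h : (a, b, c) ∈ D) : b ≤ part D c a := by
  have hrow : ∀ b' ∈ Finset.Icc 1 b, ((a, b', c) : Node) ∈
      D.filter (fun γ => nrow γ = a ∧ ncomp γ = c) := fun b' hb' =>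
    Finset.mem_filter.2 ⟨hD.2.1 _ h b' (Finset.mem_Icc.1 hb').1 (Finset.mem_Icc.1 hb').2, rfl, rfl⟩
  simpa [part] using Finset.card_le_card_of_injOn (fun b' => ((a, b', c) : Node)) hrow
    (fun _ _ _ _ h => congrArg ncol h)

lemma part_lt_of_notMem (hD : IsDiagram D) (hb : 1 ≤ b) (h : (a, b, c) ∉ D) :
    part D c a < b := by
  have hrow : D.filter (fun γ => nrow γ = a ∧ ncomp γ = c) ⊆
      (Finset.Icc 1 (b - 1)).image (fun b' => ((a, b', c) : Node)) := by
    rintro ⟨a', b', c'⟩ hγ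
    obtain ⟨hγD, rfl, rfl⟩ := Finset.mem_filter.1 hγ
    have hb' : b' < b := by
      by_contra hle
      exact h (hD.2.1 _ hγD b hb (not_lt.1 hle))
    exact Finset.mem_image.2 ⟨b', Finset.mem_Icc.2 ⟨(hD.1 _ hγD).2, by omega⟩, rfl⟩
  have := (Finset.card_le_card hrow).trans Finset.card_image_le
  simp only [Nat.card_Icc] at this
  exact lt_of_le_of_lt this (by omega)

lemma mem_iff_le_part (hD : IsDiagram D) :
    (a, b, c) ∈ D ↔ 1 ≤ a ∧ 1 ≤ b ∧ b ≤ part D c a := by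
  refine ⟨fun h => ⟨(hD.1 _ h).1, (hD.1 _ h).2, le_part_of_mem hD h⟩, ?_⟩
  rintro ⟨-, hb, hle⟩
  by_contra h
  exact (part_lt_of_notMem hD hb h).not_ge hle

lemma part_succ_le (hD : IsDiagram D) (ha : 1 ≤ a) : part D c (a + 1) ≤ part D c a := by
  rcases Nat.eq_zero_or_pos (part D c (a + 1)) with h | h
  · omega
  have hmem := (mem_iff_le_part hD).2 ⟨by omega, h, le_rfl⟩
  exact le_part_of_mem hD (hD.2.2 _ hmem (by simp only [nrow]; omega))

lemma part_anti (hD : IsDiagram D) (ha : 1 ≤ a) (h : a ≤ a') : part D c a' ≤ part D c a := by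
  induction a', h using Nat.le_induction with
  | base => rfl
  | succ n hn ih => exact (part_succ_le hD (ha.trans hn)).trans ih

lemma part_eq_zero_of_card_lt (hD : IsDiagram D) (h : D.card < a) : part D c a = 0 := by
  by_contra hpos
  have hcol : ∀ j ∈ Finset.Icc 1 a, ((j, 1, c) : Node) ∈ D := fun j hj => by
    obtain ⟨hj1, hja⟩ := Finset.mem_Icc.1 hj
    exact (mem_iff_le_part hD).2 ⟨hj1, le_rfl, by have := part_anti hD (c := c) hj1 hja; omega⟩
  have := Finset.card_le_card_of_injOn (fun j => ((j, 1, c) : Node)) hcol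
    (fun _ _ _ _ h => congrArg nrow h)
  simp only [Nat.card_Icc] at this
  omega

end Diagram

section Corners

variable {D : Finset Node} {a b : ℕ} {c : Fin 2} {γ : Node}

lemma part_erase_self (hγ : γ ∈ D) :
    part (D.erase γ) (ncomp γ) (nrow γ) = part D (ncomp γ) (nrow γ) - 1 := by
  unfold part
  rw [Finset.filter_erase]
  exact Finset.card_erase_of_mem (Finset.mem_filter.2 ⟨hγ, rfl, rfl⟩)

lemma part_erase_of_ne (h : ¬(nrow γ = a ∧ ncomp γ = c)) : part (D.erase γ) c a = part D c a := by
  unfold part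
  rw [Finset.filter_erase]
  exact congrArg Finset.card (Finset.erase_eq_of_notMem fun hm => h (Finset.mem_filter.1 hm).2)

lemma part_erase_le : part (D.erase γ) c a ≤ part D c a :=
  Finset.card_le_card (Finset.filter_subset_filter _ (Finset.erase_subset _ _))

lemma part_insert_self (hγ : γ ∉ D) :
    part (insert γ D) (ncomp γ) (nrow γ) = part D (ncomp γ) (nrow γ) + 1 := by
  unfold part
  rw [Finset.filter_insert, if_pos ⟨rfl, rfl⟩]
  exact Finset.card_insert_of_notMem fun hm => hγ (Finset.mem_filter.1 hm).1

lemma part_insert_of_ne (h : ¬(nrow γ = a ∧ ncomp γ = c)) :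
    part (insert γ D) c a = part D c a := by
  unfold part
  rw [Finset.filter_insert, if_neg h]

lemma removable_iff (hD : IsDiagram D) :
    Removable D (a, b, c) ↔ 1 ≤ a ∧ b = part D c a ∧ part D c (a + 1) < b := by
  constructor
  · rintro ⟨hmem, hE⟩
    obtain ⟨ha, hb, hle⟩ := (mem_iff_le_part hD).1 hmem
    have hself : part (D.erase (a, b, c)) c a = part D c a - 1 := part_erase_self hmem
    have hb_eq : b = part D c a := by
      by_contra hne
      have hlast : (a, part D c a, c) ∈ D.erase (a, b, c) :=
        Finset.mem_erase.2 ⟨by simp only [ne_eq, Prod.mk.injEq]; omega,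
          (mem_iff_le_part hD).2 ⟨ha, by omega, le_rfl⟩⟩
      have := le_part_of_mem hE hlast
      omega
    have hsucc := part_succ_le hE (c := c) ha
    rw [part_erase_of_ne (by simp [nrow])] at hsucc
    omega
  · rintro ⟨ha, rfl, hlt⟩
    have hmem : (a, part D c a, c) ∈ D := (mem_iff_le_part hD).2 ⟨ha, by omega, le_rfl⟩
    refine ⟨hmem, fun γ hγ => hD.1 γ (Finset.mem_of_mem_erase hγ), ?_, ?_⟩
    · rintro ⟨a', b', c'⟩ hγ b'' hb1 hb2
      obtain ⟨hne, hγD⟩ := Finset.mem_erase.1 hγ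
      refine Finset.mem_erase.2 ⟨?_, hD.2.1 _ hγD b'' hb1 hb2⟩
      simp only [nrow, ncol, ncomp, ne_eq, Prod.mk.injEq] at hne hb2 ⊢
      rintro ⟨rfl, rfl, rfl⟩
      have := le_part_of_mem hD hγD
      omega
    · rintro ⟨a', b', c'⟩ hγ h2
      obtain ⟨-, hγD⟩ := Finset.mem_erase.1 hγ
      refine Finset.mem_erase.2 ⟨?_, hD.2.2 _ hγD h2⟩
      simp only [nrow, ncol, ncomp, ne_eq, Prod.mk.injEq] at h2 ⊢
      rintro ⟨ha', rfl, rfl⟩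
      obtain rfl : a' = a + 1 := by omega
      have := le_part_of_mem hD hγD
      omega

lemma addable_iff (hD : IsDiagram D) :
    Addable D (a, b, c) ↔ 1 ≤ a ∧ b = part D c a + 1 ∧ (a = 1 ∨ b ≤ part D c (a - 1)) := by
  constructor
  · rintro ⟨hnotMem, hI⟩
    have hmem : (a, b, c) ∈ insert (a, b, c) D := Finset.mem_insert_self _ _
    obtain ⟨ha, hb, hle⟩ := (mem_iff_le_part hI).1 hmem
    have hlt := part_lt_of_notMem hD hb hnotMem
    rw [show part (insert (a, b, c) D) c a = part D c a + 1 from part_insert_self hnotMem] at hle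
    refine ⟨ha, by omega, ?_⟩
    rcases Nat.lt_or_ge a 2 with ha1 | ha2
    · exact Or.inl (by omega)
    · right
      have hanti := part_anti hI (c := c) (a := a - 1) (by omega) (Nat.sub_le a 1)
      rw [show part (insert (a, b, c) D) c a = part D c a + 1 from part_insert_self hnotMem,
        part_insert_of_ne (by simp only [nrow]; omega)] at hanti
      omega
  · rintro ⟨ha, rfl, hup⟩
    have hnotMem : (a, part D c a + 1, c) ∉ D := fun h => by
      have := le_part_of_mem hD h
      omega
    refine ⟨hnotMem, ?_, ?_, ?_⟩
    · intro γ hγ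
      rcases Finset.mem_insert.1 hγ with rfl | h
      exacts [⟨ha, by simp [ncol]⟩, hD.1 γ h]
    · rintro γ hγ b' hb1 hb2
      rcases Finset.mem_insert.1 hγ with rfl | h
      · simp only [nrow, ncol, ncomp] at hb2 ⊢
        rcases eq_or_lt_of_le hb2 with rfl | hlt
        · exact Finset.mem_insert_self _ _
        · exact Finset.mem_insert_of_mem ((mem_iff_le_part hD).2 ⟨ha, hb1, by omega⟩)
      · exact Finset.mem_insert_of_mem (hD.2.1 γ h b' hb1 hb2)
    · rintro γ hγ h2
      rcases Finset.mem_insert.1 hγ with rfl | h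
      · simp only [nrow, ncol, ncomp] at h2 ⊢
        exact Finset.mem_insert_of_mem ((mem_iff_le_part hD).2 ⟨by omega, by omega, by omega⟩)
      · exact Finset.mem_insert_of_mem (hD.2.2 γ h h2)

end Corners

section Content

variable {D : Finset Node} {s : Fin 2 → ℤ} {a a' : ℕ} {c : Fin 2}

lemma cont_mk (s : Fin 2 → ℤ) (a b : ℕ) (c : Fin 2) : cont s (a, b, c) = (b : ℤ) - a + s c := rfl

lemma row_eq_of_part_sub_eq (hD : IsDiagram D) (ha : 1 ≤ a) (ha' : 1 ≤ a')
    (h : (part D c a : ℤ) - a = part D c a' - a') : a = a' := by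
  rcases le_total a a' with hle | hle
  · have := part_anti hD (c := c) ha hle
    omega
  · have := part_anti hD (c := c) ha' hle
    omega

lemma eq_of_addable_of_cont_eq (hD : IsDiagram D) {x y : Node} (hx : Addable D x)
    (hy : Addable D y) (hc : ncomp x = ncomp y) (h : cont s x = cont s y) : x = y := by
  obtain ⟨a, b, c⟩ := x
  obtain ⟨a', b', c'⟩ := y
  obtain rfl : c = c' := hc
  obtain ⟨ha, rfl, -⟩ := (addable_iff hD).1 hx
  obtain ⟨ha', rfl, -⟩ := (addable_iff hD).1 hy
  simp only [cont_mk] at h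
  obtain rfl := row_eq_of_part_sub_eq hD (c := c) ha ha' (by push_cast at h; omega)
  rfl

lemma eq_of_removable_of_cont_eq (hD : IsDiagram D) {x y : Node} (hx : Removable D x)
    (hy : Removable D y) (hc : ncomp x = ncomp y) (h : cont s x = cont s y) : x = y := by
  obtain ⟨a, b, c⟩ := x
  obtain ⟨a', b', c'⟩ := y
  obtain rfl : c = c' := hc
  obtain ⟨ha, rfl, -⟩ := (removable_iff hD).1 hx
  obtain ⟨ha', rfl, -⟩ := (removable_iff hD).1 hy
  simp only [cont_mk] at h
  obtain rfl := row_eq_of_part_sub_eq hD (c := c) ha ha' (by omega)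
  rfl

lemma not_removable_of_addable_of_cont_eq (hD : IsDiagram D) {x y : Node} (hx : Addable D x)
    (hc : ncomp x = ncomp y) (h : cont s x = cont s y) : ¬ Removable D y := by
  intro hy
  obtain ⟨a, b, c⟩ := x
  obtain ⟨a', b', c'⟩ := y
  obtain rfl : c = c' := hc
  obtain ⟨ha, rfl, -⟩ := (addable_iff hD).1 hx
  obtain ⟨ha', rfl, hlt⟩ := (removable_iff hD).1 hy
  simp only [cont_mk] at h
  push_cast at h
  rcases Nat.lt_or_ge a' a with hlt' | hle
  · have := part_anti hD (c := c) (Nat.le_add_left 1 a') hlt'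
    omega
  · have := part_anti hD (c := c) ha hle
    omega

lemma chargeLT_iff_of_cont_eq {x y : Node} (h : cont s x = cont s y) :
    chargeLT s x y ↔ ncomp x = 1 ∧ ncomp y = 0 := by
  simp only [chargeLT, h, lt_irrefl, false_or, true_and]
  generalize ncomp x = i
  generalize ncomp y = j
  fin_cases i <;> fin_cases j <;> decide

end Content

section GoodNodes

variable {D : Finset Node} {s : Fin 2 → ℤ} {γ : Node}

lemma normalNode_of_comp_zero (hγ : Removable D γ) (hc : ncomp γ = 0) :
    NormalNode D (chargeLT s) (cont s) (cont s γ) γ := by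
  refine ⟨hγ, rfl, fun η hη hlt => ?_⟩
  have := ((chargeLT_iff_of_cont_eq hη.symm).1 hlt).1
  simp [hc] at this

lemma normalNode_of_addable_cont_ne (hγ : Removable D γ)
    (hfree : ∀ x, Addable D x → ncomp x = 0 → cont s x ≠ cont s γ) :
    NormalNode D (chargeLT s) (cont s) (cont s γ) γ := by
  refine ⟨hγ, rfl, fun η _ _ => ?_⟩
  have hempty : {x : Node | Addable D x ∧ cont s x = cont s γ ∧ chargeLT s γ x ∧
      (chargeLT s x η ∨ x = η)} = ∅ := by
    refine Set.eq_empty_of_forall_notMem fun x ⟨hx, hcx, hlt, _⟩ => ?_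
    exact hfree x hx ((chargeLT_iff_of_cont_eq hcx.symm).1 hlt).2 hcx
  simp [hempty]

lemma goodNode_of_comp_zero (hD : IsDiagram D) (hγ : Removable D γ) (hc : ncomp γ = 0)
    (hfree : ∀ x, Removable D x → ncomp x = 1 → cont s x ≠ cont s γ) :
    GoodNode D (chargeLT s) (cont s) (cont s γ) γ := by
  refine ⟨normalNode_of_comp_zero hγ hc, fun δ ⟨hδ, hcδ, _⟩ => Or.inl ?_⟩
  rcases Fin.exists_fin_two.1 ⟨ncomp δ, rfl⟩ with h0 | h1
  · exact eq_of_removable_of_cont_eq hD hδ hγ (h0.trans hc.symm) hcδ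
  · exact absurd hcδ (hfree δ hδ h1)

lemma goodNode_of_comp_one (hD : IsDiagram D) (hγ : Removable D γ) (hc : ncomp γ = 1)
    (hfree : ∀ x, Addable D x → ncomp x = 0 → cont s x ≠ cont s γ) :
    GoodNode D (chargeLT s) (cont s) (cont s γ) γ := by
  refine ⟨normalNode_of_addable_cont_ne hγ hfree, fun δ ⟨hδ, hcδ, _⟩ => ?_⟩
  rcases Fin.exists_fin_two.1 ⟨ncomp δ, rfl⟩ with h0 | h1
  · exact Or.inr ((chargeLT_iff_of_cont_eq hcδ.symm).2 ⟨hc, h0⟩)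
  · exact Or.inl (eq_of_removable_of_cont_eq hD hδ hγ (h1.trans hc.symm) hcδ)

lemma not_normalNode_of_addable_comp_zero (hD : IsDiagram D) (hc : ncomp γ = 1) {η : Node}
    (hη : Addable D η) (hη₀ : ncomp η = 0) (h : cont s η = cont s γ) (i : ℤ) :
    ¬ NormalNode D (chargeLT s) (cont s) i γ := by
  rintro ⟨-, rfl, hnormal⟩
  have hlt : chargeLT s γ η := (chargeLT_iff_of_cont_eq h.symm).2 ⟨hc, hη₀⟩
  have haddable : {x : Node | Addable D x ∧ cont s x = cont s γ ∧ chargeLT s γ x ∧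
      (chargeLT s x η ∨ x = η)} = {η} := by
    ext x
    refine ⟨fun ⟨hx, hcx, hltx, _⟩ => ?_, by rintro rfl; exact ⟨hη, h, hlt, Or.inr rfl⟩⟩
    have hx₀ := ((chargeLT_iff_of_cont_eq hcx.symm).1 hltx).2
    exact eq_of_addable_of_cont_eq hD hx hη (hx₀.trans hη₀.symm) (hcx.trans h.symm)
  have hremovable : {x : Node | Removable D x ∧ cont s x = cont s γ ∧ chargeLT s γ x ∧
      (chargeLT s x η ∨ x = η)} = ∅ := by
    refine Set.eq_empty_of_forall_notMem fun x ⟨hx, hcx, hltx, _⟩ => ?_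
    have hx₀ := ((chargeLT_iff_of_cont_eq hcx.symm).1 hltx).2
    exact not_removable_of_addable_of_cont_eq hD hη (hη₀.trans hx₀.symm) (h.trans hcx.symm) hx
  simpa [haddable, hremovable] using hnormal η h hlt

end GoodNodes

lemma CrystalSet.isDiagram {α : Type*} {lt : Node → Node → Prop} {r : Node → α} {n : ℕ}
    {D : Finset Node} (h : CrystalSet lt r n D) : IsDiagram D := by
  cases h with
  | empty => exact ⟨by simp, by simp, by simp⟩
  | step _ hD _ _ => exact hD

lemma CrystalSet.card_eq {α : Type*} {lt : Node → Node → Prop} {r : Node → α} {n : ℕ}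
    {D : Finset Node} (h : CrystalSet lt r n D) : D.card = n := by
  induction h with
  | empty => rfl
  | step _ _ hγ _ ih =>
    have hγD := hγ.1.1.1
    rw [← ih, Finset.card_erase_of_mem hγD, Nat.sub_add_cancel (Finset.card_pos.2 ⟨_, hγD⟩)]

def ShiftDominated (d : ℕ) (D : Finset Node) : Prop :=
  ∀ i : ℕ, 1 ≤ i → part D 1 (i + d) ≤ part D 0 i

section Dominance

variable {D : Finset Node} {s : Fin 2 → ℤ} {d : ℕ}

lemma shiftDominated_of_erase_goodNode (hd : (d : ℤ) = s 1 - s 0) (hD : IsDiagram D) {i : ℤ}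
    {γ : Node} (hγ : GoodNode D (chargeLT s) (cont s) i γ) (h : ShiftDominated d (D.erase γ)) :
    ShiftDominated d D := by
  intro j hj
  by_contra hviol
  have hγD : γ ∈ D := hγ.1.1.1
  obtain ⟨a, b, c⟩ := γ
  have hj' := h j hj
  obtain ⟨rfl, rfl⟩ : a = j + d ∧ c = 1 := by
    by_contra hrow
    have := part_erase_of_ne (D := D) (c := 1) (a := j + d) (γ := (a, b, c))
      (by simpa only [nrow, ncomp] using hrow)
    have := part_erase_le (D := D) (γ := (a, b, c)) (c := 0) (a := j)
    omega
  have hjump : part D 1 (j + d) = part D 0 j + 1 := by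
    have : part (D.erase (j + d, b, 1)) 1 (j + d) = part D 1 (j + d) - 1 := part_erase_self hγD
    rw [part_erase_of_ne (c := 0) (a := j) (by simp [ncomp])] at hj'
    omega
  obtain ⟨-, rfl, -⟩ := (removable_iff hD).1 hγ.1.1
  have hη : Addable D (j, part D 0 j + 1, 0) := by
    refine (addable_iff hD).2 ⟨hj, rfl, ?_⟩
    rcases Nat.lt_or_ge j 2 with hj1 | hj2
    · exact Or.inl (by omega)
    · have hprev := h (j - 1) (by omega)
      rw [part_erase_of_ne (by simp only [nrow]; omega),
        part_erase_of_ne (by simp [ncomp])] at hprev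
      have := part_anti hD (c := 1) (by omega : 1 ≤ j - 1 + d) (by omega : j - 1 + d ≤ j + d)
      omega
  refine not_normalNode_of_addable_comp_zero hD rfl hη rfl ?_ i hγ.1
  simp only [cont_mk]
  push_cast
  omega

lemma CrystalSet.shiftDominated (hd : (d : ℤ) = s 1 - s 0) {n : ℕ}
    (h : CrystalSet (chargeLT s) (cont s) n D) : ShiftDominated d D := by
  induction h with
  | empty => exact fun i _ => by simp [part]
  | step _ hD hγ _ ih => exact shiftDominated_of_erase_goodNode hd hD hγ ih

lemma ShiftDominated.erase_of_comp_one (h : ShiftDominated d D) {γ : Node}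
    (hc : ncomp γ = 1) : ShiftDominated d (D.erase γ) := by
  intro j hj
  have := h j hj
  have := part_erase_le (D := D) (γ := γ) (c := 1) (a := j + d)
  rw [part_erase_of_ne (c := 0) (a := j) (by simp [hc])]
  omega

lemma exists_goodNode_comp_zero (hD : IsDiagram D) (hdom : ShiftDominated d D)
    (hblocked : ∀ ρ, Removable D ρ → ncomp ρ = 1 →
      ∃ x, Addable D x ∧ ncomp x = 0 ∧ cont s x = cont s ρ)
    {i₀ : ℕ} (hi₀ : 1 ≤ i₀) (hv : 1 ≤ part D 0 i₀) (hvanish : part D 1 (i₀ + d) = 0) :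
    ∃ γ, GoodNode D (chargeLT s) (cont s) (cont s γ) γ ∧ Removable D γ ∧
      ShiftDominated d (D.erase γ) := by
  obtain ⟨i', hi', hv', hlast⟩ := exists_le_and_lt_succ (f := part D 0) (i₀ := i₀) le_rfl
    (N := i₀ + D.card + 1) (by rw [part_eq_zero_of_card_lt hD (by omega)]; omega) (by omega)
  have hpart := part_anti hD (c := 0) hi₀ hi'
  have hγ : Removable D (i', part D 0 i', 0) := (removable_iff hD).2 ⟨by omega, rfl, by omega⟩
  refine ⟨_, goodNode_of_comp_zero hD hγ rfl fun x hx hx₁ hcont => ?_, hγ, fun j hj => ?_⟩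
  · obtain ⟨y, hy, hy₀, hcy⟩ := hblocked x hx hx₁
    exact not_removable_of_addable_of_cont_eq hD (y := (i', part D 0 i', 0)) hy hy₀
      (hcy.trans hcont) hγ
  · have := hdom j hj
    have := part_anti hD (c := 1) (by omega : 1 ≤ i₀ + d) (by omega : i₀ + d ≤ i' + d)
    rw [part_erase_of_ne (by simp [ncomp])]
    by_cases hji : j = i'
    · subst hji
      have : part (D.erase (j, part D 0 j, 0)) 0 j = part D 0 j - 1 := part_erase_self hγ.1
      omega
    · rw [part_erase_of_ne (by simp only [nrow]; omega)]
      omega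

lemma exists_row_part_one_eq_zero (hd : (d : ℤ) = s 1 - s 0) (hD : IsDiagram D)
    (hne : D.Nonempty) (hdom : ShiftDominated d D)
    (hblocked : ∀ ρ, Removable D ρ → ncomp ρ = 1 →
      ∃ x, Addable D x ∧ ncomp x = 0 ∧ cont s x = cont s ρ) :
    ∃ i₀, 1 ≤ i₀ ∧ 1 ≤ part D 0 i₀ ∧ part D 1 (i₀ + d) = 0 := by
  by_cases h₁ : 1 ≤ part D 1 1
  · obtain ⟨ℓ, hℓ, hℓpos, hℓlast⟩ := exists_le_and_lt_succ (f := part D 1) h₁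
      (N := D.card + 1) (by rw [part_eq_zero_of_card_lt hD (by omega)]; omega) (by omega)
    have hρ : Removable D (ℓ, part D 1 ℓ, 1) := (removable_iff hD).2 ⟨hℓ, rfl, by omega⟩
    obtain ⟨⟨i₀, b, c⟩, hx, hc, hcont⟩ := hblocked _ hρ rfl
    obtain rfl : c = 0 := hc
    obtain ⟨hi₀, rfl, -⟩ := (addable_iff hD).1 hx
    simp only [cont_mk] at hcont
    push_cast at hcont
    have hℓlt : ℓ < i₀ + d := by
      by_contra hge
      have := part_anti hD (c := 1) (by omega : 1 ≤ i₀ + d) (not_lt.1 hge)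
      have := hdom i₀ hi₀
      omega
    have := part_anti hD (c := 1) (by omega : 1 ≤ ℓ + 1) (hℓlt : ℓ + 1 ≤ i₀ + d)
    exact ⟨i₀, hi₀, by omega, by omega⟩
  · refine ⟨1, le_rfl, ?_, ?_⟩
    · obtain ⟨⟨a, b, c⟩, hγ⟩ := hne
      obtain ⟨ha, hb, hle⟩ := (mem_iff_le_part hD).1 hγ
      have := part_anti hD (c := c) le_rfl ha
      rcases Fin.exists_fin_two.1 ⟨c, rfl⟩ with rfl | rfl <;> omega
    · have := part_anti hD (c := 1) le_rfl (by omega : 1 ≤ 1 + d)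
      omega

lemma exists_goodNode_erase_shiftDominated (hd : (d : ℤ) = s 1 - s 0) (hD : IsDiagram D)
    (hne : D.Nonempty) (hdom : ShiftDominated d D) :
    ∃ γ, GoodNode D (chargeLT s) (cont s) (cont s γ) γ ∧ Removable D γ ∧
      ShiftDominated d (D.erase γ) := by
  by_cases hfree : ∃ ρ, Removable D ρ ∧ ncomp ρ = 1 ∧
      ∀ x, Addable D x → ncomp x = 0 → cont s x ≠ cont s ρ
  · obtain ⟨ρ, hρ, hρ₁, hρfree⟩ := hfree
    exact ⟨ρ, goodNode_of_comp_one hD hρ hρ₁ hρfree, hρ, hdom.erase_of_comp_one hρ₁⟩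
  · push Not at hfree
    obtain ⟨i₀, hi₀, hv, hvanish⟩ := exists_row_part_one_eq_zero hd hD hne hdom hfree
    exact exists_goodNode_comp_zero hD hdom hfree hi₀ hv hvanish

lemma crystalSet_of_shiftDominated (hd : (d : ℤ) = s 1 - s 0) {n : ℕ} (hD : IsDiagram D)
    (hcard : D.card = n) (hdom : ShiftDominated d D) :
    CrystalSet (chargeLT s) (cont s) n D := by
  induction n generalizing D with
  | zero => exact Finset.card_eq_zero.1 hcard ▸ .empty
  | succ n ih =>
    obtain ⟨γ, hgood, hγ, hdom'⟩ :=
      exists_goodNode_erase_shiftDominated hd hD (Finset.card_pos.1 (by omega)) hdom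
    exact .step _ hD hgood (ih hγ.2 (by rw [Finset.card_erase_of_mem hγ.1, hcard]; rfl) hdom')

end Dominance

/-- the set `Φ_{∞,n}^{(s₀,s₁)}` (crystal for `sl_∞`, integer residues) is
exactly the set of bipartitions of rank `n` with `λ⁽⁰⁾_i ≥ λ⁽¹⁾_{i+s₁-s₀}` for all
`i ≥ 1`. -/
theorem phi_infinity_characterization (s₀ s₁ : ℤ) (hs : s₀ ≤ s₁) (n : ℕ)
    (D : Finset Node) :
    CrystalSet (chargeLT ![s₀, s₁]) (cont ![s₀, s₁]) n D ↔
      (IsDiagram D ∧ D.card = n ∧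
        ∀ i : ℕ, 1 ≤ i → part D 1 (i + (s₁ - s₀).toNat) ≤ part D 0 i) := by
  have hd : (((s₁ - s₀).toNat : ℕ) : ℤ) = ![s₀, s₁] 1 - ![s₀, s₁] 0 := by
    simpa using hs
  exact ⟨fun h => ⟨h.isDiagram, h.card_eq, h.shiftDominated hd⟩,
    fun ⟨hD, hcard, hdom⟩ => crystalSet_of_shiftDominated hd hD hcard hdom⟩

end UglovPaper
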